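/- Let n = 2ν be even with ν ≥ 2. Then for every r ∈ {0, 1, …, ν−1}, the number λ_r = 8 sin²(rπ/(n−1)) is an eigenvalue of the Laplacian matrix L(F_2(C_n)); moreover λ_0 = 0, and λ_{ν−1} = 8 sin²(((n−2)/(n−1))·(π/2)) equals the largest Laplacian eigenvalue (spectral radius) of F_2(C_n). -/

import Mathlib

open Finset Polynomial Real Matrix

noncomputable section

/-- The `k`-token graph of a simple graph `G`. -/
def tokenGraph {V : Type*} [DecidableEq V] (G : SimpleGraph V) (k : ℕ) :
    SimpleGraph {s : Finset V // s.card = k} where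
  Adj A B := ∃ a b, G.Adj a b ∧ a ∈ A.1 ∧ b ∈ B.1 ∧ symmDiff A.1 B.1 = {a, b}
  symm := by
    constructor
    rintro A B ⟨a, b, hab, ha, hb, hd⟩
    exact ⟨b, a, hab.symm, hb, ha, by rw [symmDiff_comm, hd, Finset.pair_comm]⟩
  loopless := by
    constructor
    rintro A ⟨a, b, hab, ha, hb, hd⟩
    rw [symmDiff_self, Finset.bot_eq_empty] at hd
    exact (Finset.insert_ne_empty a {b}) hd.symm

/-- The Laplacian matrix (over ℝ) of a finite simple graph. -/
def lapMat {V : Type*} [Fintype V] [DecidableEq V] (G : SimpleGraph V) : Matrix V V ℝ :=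
  letI := Classical.decRel G.Adj
  G.lapMatrix ℝ

/-- The Laplacian matrix (over ℂ) of a finite simple graph. -/
def lapMatC {V : Type*} [Fintype V] [DecidableEq V] (G : SimpleGraph V) : Matrix V V ℂ :=
  letI := Classical.decRel G.Adj
  G.lapMatrix ℂ

/-- The Laplacian eigenvalues of `G`, with multiplicity, in nondecreasing order. -/
def lapSpec {V : Type*} [Fintype V] [DecidableEq V] (G : SimpleGraph V) : List ℝ :=
  ((lapMat G).charpoly.roots).sort (· ≤ ·)

/-- The algebraic connectivity: the second-smallest Laplacian eigenvalue. -/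
def algConn {V : Type*} [Fintype V] [DecidableEq V] (G : SimpleGraph V) : ℝ :=
  (lapSpec G).getD 1 0

/-- The largest Laplacian eigenvalue (Laplacian spectral radius). -/
def lapSpecRadius {V : Type*} [Fintype V] [DecidableEq V] (G : SimpleGraph V) : ℝ :=
  (lapSpec G).getLastD 0

/-- `μ` is an eigenvalue of the Laplacian matrix of `G`. -/
def IsLapEigen {V : Type*} [Fintype V] [DecidableEq V] (G : SimpleGraph V) (μ : ℝ) : Prop :=
  ∃ v : V → ℝ, v ≠ 0 ∧ (lapMat G).mulVec v = μ • v

/-- The induced subgraph of `G` on the complement of the vertex `i` (i.e. `G ∖ i`). -/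
def deleteVert {V : Type*} (G : SimpleGraph V) (i : V) : SimpleGraph {v : V // v ≠ i} :=
  SimpleGraph.comap Subtype.val G

/-- The cycle graph on `ℤ/nℤ`, where `i` is adjacent to `i ± 1`. -/
def cycleG (n : ℕ) : SimpleGraph (ZMod n) where
  Adj x y := x ≠ y ∧ (x - y = 1 ∨ y - x = 1)
  symm := by constructor; rintro x y ⟨hxy, h⟩; exact ⟨hxy.symm, h.symm⟩
  loopless := by constructor; rintro x ⟨hx, _⟩; exact hx rfl

/-- The inclusion matrix from `h`-subsets to `k`-subsets: rows indexed by `k`-subsets `A`,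
columns by `h`-subsets `X`, with entry `1` if `X ⊆ A` and `0` otherwise. -/
def inclMatrix (V : Type*) [Fintype V] [DecidableEq V] (h k : ℕ) :
    Matrix {s : Finset V // s.card = k} {s : Finset V // s.card = h} ℝ :=
  fun A X => if X.1 ⊆ A.1 then 1 else 0

/-- The `(n;k)`-binomial matrix: rows indexed by `k`-subsets `A`, columns by vertices `j`,
with entry `1` if `j ∈ A` and `0` otherwise. -/
def binomMatrix (V : Type*) [Fintype V] [DecidableEq V] (k : ℕ) :
    Matrix {s : Finset V // s.card = k} V ℝ :=
  fun A j => if j ∈ A.1 then 1 else 0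

/-- The Kneser graph `K(n,k)`. -/
def kneserGraph (n k : ℕ) : SimpleGraph {s : Finset (Fin n) // s.card = k} where
  Adj A B := A ≠ B ∧ Disjoint A.1 B.1
  symm := by constructor; rintro A B ⟨h1, h2⟩; exact ⟨h1.symm, h2.symm⟩
  loopless := by constructor; rintro A ⟨h1, _⟩; exact h1 rfl

end

/-!
A vertex of `F₂(Cₙ)` is a pair `{p, q}`; consider vectors `{p, q} ↦ g (q - p)` with `g` even on
`ℤ/nℤ`. Each token moves by `±1`, changing `q - p` by `±1`, except onto the other token. If
`g 1 = ε g 0`, that forbidden move would contribute `g (±1) - ε g 0 = 0` to `(D - ε A)` of the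
vector, so it may be counted as well, and then a three-term recurrence
`g (z - 1) + g (z + 1) = 2 c g z` (`z ≠ 0`) makes the vector an eigenvector of `D - ε A` with
eigenvalue `4 (1 - ε c)`. For `ε = 1` the modes `g k = cos ((2k - 1) rπ/(n - 1))` give the
Laplacian eigenvalues `8 sin² (rπ/(n - 1))`. For `ε = -1` the mode
`g k = sin ((2k - 1) π/(2(n - 1)))` is a positive eigenvector of the signless Laplacian `D + A`
with eigenvalue `μ = 8 cos² (π/(2(n - 1)))`. Both kinds of modes are invariant under `k ↦ n - k`,
hence even on `ℤ/nℤ`, because `2(n - 1)` times their frequency lies in `2πℤ`, resp. equals `π`.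
Comparing a Laplacian eigenvector `x` with the positive sine mode `w` at a vertex maximising
`|x| / w` bounds every Laplacian eigenvalue by `μ`, and `μ = λ_{ν-1}` when `n = 2ν`.
-/

section LaplacianSpectrum

variable {V : Type*} [Fintype V] [DecidableEq V] (G : SimpleGraph V)

theorem lapMat_eq_lapMatrix [DecidableRel G.Adj] : lapMat G = G.lapMatrix ℝ := by
  unfold lapMat
  congr!

theorem isLapEigen_iff_mem_roots_charpoly {μ : ℝ} :
    IsLapEigen G μ ↔ μ ∈ (lapMat G).charpoly.roots := by
  rw [mem_roots (lapMat G).charpoly_monic.ne_zero, ← Matrix.mem_spectrum_iff_isRoot_charpoly,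
    ← Matrix.spectrum_toLin', ← Module.End.hasEigenvalue_iff_mem_spectrum,
    Module.End.hasEigenvalue_iff, Submodule.ne_bot_iff]
  simp only [Module.End.mem_eigenspace_iff, Matrix.toLin'_apply, IsLapEigen]
  exact ⟨fun ⟨v, hv, h⟩ => ⟨v, h, hv⟩, fun ⟨v, h, hv⟩ => ⟨v, hv, h⟩⟩

theorem lapSpecRadius_eq_of_forall_le {μ : ℝ} (hμ : IsLapEigen G μ)
    (hle : ∀ lam, IsLapEigen G lam → lam ≤ μ) : lapSpecRadius G = μ := by
  have hmem : μ ∈ lapSpec G :=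
    (Multiset.mem_sort _).2 ((isLapEigen_iff_mem_roots_charpoly G).1 hμ)
  have hne : lapSpec G ≠ [] := List.ne_nil_of_mem hmem
  have hlast : lapSpecRadius G = (lapSpec G).getLast hne := by
    rw [lapSpecRadius, List.getLastD_eq_getLast?, List.getLast?_eq_some_getLast hne,
      Option.getD_some]
  rw [hlast]
  refine le_antisymm (hle _ ((isLapEigen_iff_mem_roots_charpoly G).2 ?_)) ?_
  · exact (Multiset.mem_sort _).1 (List.getLast_mem hne)
  · exact (Multiset.pairwise_sort _ _).rel_getLast_of_rel_getLast_getLast hmem le_rfl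

theorem le_of_isLapEigen_of_sum_neighborFinset_le [DecidableRel G.Adj] {w : V → ℝ} {μ lam : ℝ}
    (hw : ∀ v, 0 < w v) (hsum : ∀ v, ∑ u ∈ G.neighborFinset v, w u ≤ (μ - G.degree v) * w v)
    (hlam : IsLapEigen G lam) : lam ≤ μ := by
  obtain ⟨x, hx0, hx⟩ := hlam
  obtain ⟨u₀, hu₀⟩ := Function.ne_iff.1 hx0
  have : Nonempty V := ⟨u₀⟩
  obtain ⟨v, -, hv⟩ := exists_max_image univ (fun u => |x u| / w u) univ_nonempty
  have hxv : 0 < |x v| :=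
    (div_pos_iff_of_pos_right (hw v)).1
      ((div_pos (abs_pos.2 hu₀) (hw u₀)).trans_le (hv u₀ (mem_univ _)))
  have heq : (lam - G.degree v) * x v = -∑ u ∈ G.neighborFinset v, x u := by
    have := congrFun hx v
    rw [lapMat_eq_lapMatrix, SimpleGraph.lapMatrix_mulVec_apply, Pi.smul_apply,
      smul_eq_mul] at this
    linarith
  have hbound : |lam - G.degree v| * |x v| ≤ (μ - G.degree v) * |x v| :=
    calc |lam - G.degree v| * |x v| = |∑ u ∈ G.neighborFinset v, x u| := by
          rw [← abs_mul, heq, abs_neg]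
      _ ≤ ∑ u ∈ G.neighborFinset v, |x v| / w v * w u := by
          refine (abs_sum_le_sum_abs _ _).trans (sum_le_sum fun u _ => ?_)
          rw [← div_le_iff₀ (hw u)]
          exact hv u (mem_univ _)
      _ ≤ |x v| / w v * ((μ - G.degree v) * w v) := by
          rw [← mul_sum]
          exact mul_le_mul_of_nonneg_left (hsum v) (div_nonneg (abs_nonneg _) (hw v).le)
      _ = (μ - G.degree v) * |x v| := by field_simp [(hw v).ne']
  linarith [le_abs_self (lam - G.degree v), le_of_mul_le_mul_right hbound hxv]

end LaplacianSpectrum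

section TokenGraph

variable {V : Type*} [DecidableEq V] {G : SimpleGraph V} {k : ℕ}

theorem tokenGraph_adj_iff {A B : {s : Finset V // s.card = k}} :
    (tokenGraph G k).Adj A B ↔
      ∃ x ∈ A.1, ∃ y ∉ A.1, G.Adj x y ∧ B.1 = insert y (A.1.erase x) := by
  constructor
  · rintro ⟨x, y, hxy, hxA, hyB, hd⟩
    have hmem := fun z => Finset.ext_iff.1 hd z
    simp only [mem_symmDiff, mem_insert, mem_singleton] at hmem
    refine ⟨x, hxA, y, fun hyA => ?_, hxy, ?_⟩
    · have := hmem y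
      tauto
    · ext z
      have := hmem z
      have := hxy.ne
      simp only [mem_insert, mem_erase]
      by_cases hzy : z = y <;> by_cases hzx : z = x <;> subst_vars <;> tauto
  · rintro ⟨x, hxA, y, hyA, hxy, hB⟩
    refine ⟨x, y, hxy, hxA, by simp [hB], ?_⟩
    ext z
    have := hxy.ne
    simp only [hB, mem_symmDiff, mem_insert, mem_erase, mem_singleton]
    by_cases hzy : z = y <;> by_cases hzx : z = x <;> subst_vars <;> tauto

variable [Fintype V] [DecidableRel G.Adj] [DecidableRel (tokenGraph G k).Adj]

theorem sum_neighborFinset_tokenGraph (A : {s : Finset V // s.card = k}) (Φ : Finset V → ℝ) :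
    ∑ B ∈ (tokenGraph G k).neighborFinset A, Φ B.1 =
      ∑ x ∈ A.1, ∑ y ∈ G.neighborFinset x \ A.1, Φ (insert y (A.1.erase x)) := by
  rw [sum_sigma']
  symm
  refine sum_bij (fun m hm => ⟨insert m.2 (A.1.erase m.1), ?_⟩) ?_ ?_ ?_ (fun _ _ => rfl)
  · simp only [mem_sigma, mem_sdiff] at hm
    have hk : 0 < k := A.2 ▸ card_pos.2 ⟨_, hm.1⟩
    rw [card_insert_of_notMem (fun h => hm.2.2 (mem_of_mem_erase h)), card_erase_of_mem hm.1,
      A.2]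
    omega
  · rintro ⟨x, y⟩ hm
    simp only [mem_sigma, mem_sdiff, SimpleGraph.mem_neighborFinset] at hm
    exact (SimpleGraph.mem_neighborFinset _ _ _).2
      (tokenGraph_adj_iff.2 ⟨x, hm.1, y, hm.2.2, hm.2.1, rfl⟩)
  · rintro ⟨x, y⟩ hm ⟨x', y'⟩ hm' h
    simp only [mem_sigma, mem_sdiff] at hm hm'
    have h : insert y (A.1.erase x) = insert y' (A.1.erase x') := congrArg Subtype.val h
    have hy : y = y' := by
      have := h ▸ mem_insert_self y (A.1.erase x)
      simp only [mem_insert, mem_erase] at this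
      tauto
    subst hy
    have hx : x = x' := by
      by_contra hne
      have := h ▸ mem_insert_of_mem (mem_erase.2 ⟨Ne.symm hne, hm'.1⟩)
      simp only [mem_insert, mem_erase] at this
      rcases this with h' | ⟨hne', -⟩
      exacts [hm.2.2 (h' ▸ hm'.1), hne' rfl]
    rw [hx]
  · intro B hB
    obtain ⟨x, hxA, y, hyA, hxy, hB⟩ :=
      tokenGraph_adj_iff.1 ((SimpleGraph.mem_neighborFinset _ _ _).1 hB)
    exact ⟨⟨x, y⟩, by simp [hxA, hyA, hxy], Subtype.ext hB.symm⟩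

theorem degree_mul_sub_sum_neighborFinset_tokenGraph (A : {s : Finset V // s.card = k})
    (Φ : Finset V → ℝ) (ε : ℝ) :
    (tokenGraph G k).degree A * Φ A.1 - ε * ∑ B ∈ (tokenGraph G k).neighborFinset A, Φ B.1 =
      ∑ x ∈ A.1, ∑ y ∈ G.neighborFinset x \ A.1, (Φ A.1 - ε * Φ (insert y (A.1.erase x))) := by
  have hdeg := sum_neighborFinset_tokenGraph (G := G) A (fun _ => (1 : ℝ))
  simp only [sum_const, nsmul_eq_mul, mul_one, SimpleGraph.card_neighborFinset_eq_degree] at hdeg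
  simp only [hdeg, sum_mul, sum_neighborFinset_tokenGraph, mul_sum, sum_sub_distrib, sum_const,
    nsmul_eq_mul]

end TokenGraph

section PairSum

variable {V : Type*} [AddGroup V] [DecidableEq V]

/-- Symmetrises `g (q - p)` over the order of the two tokens, so that it depends only on the set
`{p, q}`. -/
def pairSum (g : V → ℝ) (S : Finset V) : ℝ := ∑ s ∈ S, ∑ t ∈ S.erase s, g (t - s)

theorem pairSum_pair {g : V → ℝ} (hg : ∀ z, g (-z) = g z) {p q : V} (h : p ≠ q) :
    pairSum g {p, q} = 2 * g (q - p) := by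
  rw [pairSum, sum_pair h, erase_insert (by simpa using h), pair_comm,
    erase_insert (by simpa using h.symm), sum_singleton, sum_singleton, ← neg_sub, hg]
  ring

end PairSum

section ValZMod

variable {n : ℕ} [NeZero n] {F : ℕ → ℝ}

theorem apply_val_natCast (hF : F n = F 0) {m : ℕ} (hm : m ≤ n) :
    F (m : ZMod n).val = F m := by
  rcases hm.lt_or_eq with hm | rfl
  · rw [ZMod.val_natCast_of_lt hm]
  · rw [ZMod.natCast_self, ZMod.val_zero, hF]

theorem apply_val_neg (hF : ∀ m ≤ n, F (n - m) = F m) (z : ZMod n) :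
    F (-z).val = F z.val := by
  have hz : -z = ((n - z.val : ℕ) : ZMod n) := by
    rw [Nat.cast_sub z.val_lt.le, ZMod.natCast_self, ZMod.natCast_zmod_val, zero_sub]
  rw [hz, apply_val_natCast (F := F) (by simpa using hF 0) (Nat.sub_le _ _), hF _ z.val_lt.le]

theorem apply_val_sub_one_add_apply_val_add_one (hF : F n = F 0) {c : ℝ}
    (hrec : ∀ m, F m + F (m + 2) = 2 * c * F (m + 1)) {z : ZMod n} (hz : z ≠ 0) :
    F (z - 1).val + F (z + 1).val = 2 * c * F z.val := by
  obtain ⟨j, hj⟩ : ∃ j, z.val = j + 1 :=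
    Nat.exists_eq_succ_of_ne_zero ((ZMod.val_ne_zero z).2 hz)
  have hjn : j + 2 ≤ n := by
    have := z.val_lt
    omega
  have hzj : z = ((j + 1 : ℕ) : ZMod n) := by rw [← hj, ZMod.natCast_zmod_val]
  have h₁ : z - 1 = (j : ZMod n) := by rw [hzj]; push_cast; ring
  have h₂ : z + 1 = ((j + 2 : ℕ) : ZMod n) := by rw [hzj]; push_cast; ring
  rw [h₁, h₂, hj, apply_val_natCast (F := F) hF (by omega), apply_val_natCast (F := F) hF hjn,
    hrec]

end ValZMod

section CycleTokens

variable {n : ℕ} [NeZero n] [DecidableRel (cycleG n).Adj]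

theorem cycleG_neighborFinset (hn : 3 ≤ n) (x : ZMod n) :
    (cycleG n).neighborFinset x = {x + 1, x - 1} := by
  have : Fact (1 < n) := ⟨by omega⟩
  ext y
  rw [SimpleGraph.mem_neighborFinset, mem_insert, mem_singleton]
  change x ≠ y ∧ (x - y = 1 ∨ y - x = 1) ↔ _
  constructor
  · rintro ⟨-, h | h⟩
    · right
      linear_combination -h
    · left
      linear_combination h
  · rintro (rfl | rfl)
    · exact ⟨fun h => one_ne_zero (by linear_combination -h), Or.inr (by ring)⟩
    · exact ⟨fun h => one_ne_zero (by linear_combination h), Or.inl (by ring)⟩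

theorem sum_neighborFinset_cycleG (hn : 3 ≤ n) (x : ZMod n) (f : ZMod n → ℝ) :
    ∑ y ∈ (cycleG n).neighborFinset x, f y = f (x + 1) + f (x - 1) := by
  have h2 : x + 1 ≠ x - 1 := by
    intro h
    have : ((2 : ℕ) : ZMod n) = 0 := by push_cast; linear_combination h
    have := Nat.le_of_dvd two_pos ((ZMod.natCast_eq_zero_iff _ _).1 this)
    omega
  rw [cycleG_neighborFinset hn, sum_pair h2]

variable {g : ZMod n → ℝ} {ε c : ℝ}

theorem sum_neighborFinset_sdiff_cycleG (hn : 3 ≤ n) (hg : ∀ z, g (-z) = g z)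
    (hg1 : g 1 = ε * g 0) {u v : ZMod n} (huv : u ≠ v) :
    ∑ y ∈ (cycleG n).neighborFinset u \ {u, v}, (pairSum g {u, v} - ε * pairSum g {y, v}) =
      2 * (2 * g (v - u) - ε * (g (v - u - 1) + g (v - u + 1))) := by
  set F : ZMod n → ℝ := fun y => 2 * g (v - u) - ε * (2 * g (v - y))
  have hF : ∀ y ∈ (cycleG n).neighborFinset u \ {u, v},
      pairSum g {u, v} - ε * pairSum g {y, v} = F y := by
    intro y hy
    simp only [mem_sdiff, mem_insert, mem_singleton, not_or] at hy
    rw [pairSum_pair hg huv, pairSum_pair hg hy.2.2]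
  have hnbr : (cycleG n).neighborFinset u \ {u, v} = ((cycleG n).neighborFinset u).erase v := by
    rw [sdiff_insert, sdiff_singleton_eq_erase, erase_eq_of_notMem (by simp)]
  -- the move of the token at `u` onto `v` is forbidden, but would contribute nothing
  have hFv : v ∈ (cycleG n).neighborFinset u → F v = 0 := by
    rw [cycleG_neighborFinset hn, mem_insert, mem_singleton]
    rintro (rfl | rfl)
    · simp only [F, add_sub_cancel_left, sub_self, hg1]
      ring
    · simp only [F, sub_sub_cancel_left, hg, sub_self, hg1]
      ring
  have hsum : ∑ y ∈ ((cycleG n).neighborFinset u).erase v, F y =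
      ∑ y ∈ (cycleG n).neighborFinset u, F y := by
    by_cases hv : v ∈ (cycleG n).neighborFinset u
    · exact sum_erase _ (hFv hv)
    · rw [erase_eq_of_notMem hv]
  have e₁ : v - (u + 1) = v - u - 1 := by ring
  have e₂ : v - (u - 1) = v - u + 1 := by ring
  rw [sum_congr rfl hF, hnbr, hsum, sum_neighborFinset_cycleG hn]
  simp only [F, e₁, e₂]
  ring

theorem degree_mul_pairSum_sub_sum_cycleG (hn : 3 ≤ n) (hg : ∀ z, g (-z) = g z)
    (hg1 : g 1 = ε * g 0) (hrec : ∀ z ≠ 0, g (z - 1) + g (z + 1) = 2 * c * g z)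
    [DecidableRel (tokenGraph (cycleG n) 2).Adj] (A : {s : Finset (ZMod n) // s.card = 2}) :
    (tokenGraph (cycleG n) 2).degree A * pairSum g A.1 -
        ε * ∑ B ∈ (tokenGraph (cycleG n) 2).neighborFinset A, pairSum g B.1 =
      4 * (1 - ε * c) * pairSum g A.1 := by
  obtain ⟨p, q, hpq, hA⟩ := card_eq_two.1 A.2
  have hsum_p : ∑ y ∈ (cycleG n).neighborFinset p \ A.1,
      (pairSum g A.1 - ε * pairSum g (insert y (A.1.erase p))) =
        2 * (2 * g (q - p) - ε * (g (q - p - 1) + g (q - p + 1))) := by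
    rw [hA, erase_insert (by simpa using hpq)]
    exact sum_neighborFinset_sdiff_cycleG hn hg hg1 hpq
  have hsum_q : ∑ y ∈ (cycleG n).neighborFinset q \ A.1,
      (pairSum g A.1 - ε * pairSum g (insert y (A.1.erase q))) =
        2 * (2 * g (p - q) - ε * (g (p - q - 1) + g (p - q + 1))) := by
    rw [hA, pair_comm, erase_insert (by simpa using hpq.symm)]
    exact sum_neighborFinset_sdiff_cycleG hn hg hg1 hpq.symm
  have hsym₁ : g (p - q) = g (q - p) := by rw [← hg, neg_sub]
  have hsym₂ : g (p - q - 1) = g (q - p + 1) := by rw [← hg]; ring_nf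
  have hsym₃ : g (p - q + 1) = g (q - p - 1) := by rw [← hg]; ring_nf
  rw [degree_mul_sub_sum_neighborFinset_tokenGraph, hA, sum_pair hpq, ← hA, hsum_p, hsum_q, hA,
    pairSum_pair hg hpq, hsym₁, hsym₂, hsym₃]
  linear_combination (-4 * ε) * hrec _ (sub_ne_zero.2 hpq.symm)

theorem degree_mul_pairSum_sub_sum_cycleG_of_nat [DecidableRel (tokenGraph (cycleG n) 2).Adj]
    {F : ℕ → ℝ} (hn : 3 ≤ n) (hF : ∀ m ≤ n, F (n - m) = F m) (hF1 : F 1 = ε * F 0)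
    (hrec : ∀ m, F m + F (m + 2) = 2 * c * F (m + 1)) (A : {s : Finset (ZMod n) // s.card = 2}) :
    (tokenGraph (cycleG n) 2).degree A * pairSum (fun z => F z.val) A.1 -
        ε * ∑ B ∈ (tokenGraph (cycleG n) 2).neighborFinset A, pairSum (fun z => F z.val) B.1 =
      4 * (1 - ε * c) * pairSum (fun z => F z.val) A.1 := by
  have hFn : F n = F 0 := by simpa using hF 0
  refine degree_mul_pairSum_sub_sum_cycleG hn (apply_val_neg hF) ?_
    (fun z hz => apply_val_sub_one_add_apply_val_add_one hFn hrec hz) A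
  rw [← Nat.cast_one, apply_val_natCast (F := F) hFn (by omega), ZMod.val_zero, hF1]

end CycleTokens

section Modes

noncomputable def cosMode (a : ℝ) (m : ℕ) : ℝ := cos ((2 * m - 1) * a)

noncomputable def sinMode (b : ℝ) (m : ℕ) : ℝ := sin ((2 * m - 1) * b)

variable {n : ℕ} {a b : ℝ}

theorem cosMode_add_cosMode_add_two (m : ℕ) :
    cosMode a m + cosMode a (m + 2) = 2 * cos (2 * a) * cosMode a (m + 1) := by
  simp only [cosMode]
  push_cast
  have e₁ : (2 * (m : ℝ) - 1) * a = (2 * (m + 1) - 1) * a - 2 * a := by ring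
  have e₂ : (2 * ((m : ℝ) + 2) - 1) * a = (2 * (m + 1) - 1) * a + 2 * a := by ring
  rw [e₁, e₂, cos_sub, cos_add]
  ring

theorem sinMode_add_sinMode_add_two (m : ℕ) :
    sinMode b m + sinMode b (m + 2) = 2 * cos (2 * b) * sinMode b (m + 1) := by
  simp only [sinMode]
  push_cast
  have e₁ : (2 * (m : ℝ) - 1) * b = (2 * (m + 1) - 1) * b - 2 * b := by ring
  have e₂ : (2 * ((m : ℝ) + 2) - 1) * b = (2 * (m + 1) - 1) * b + 2 * b := by ring
  rw [e₁, e₂, sin_sub, sin_add]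
  ring

theorem cosMode_one : cosMode a 1 = cosMode a 0 := by norm_num [cosMode]

theorem sinMode_one : sinMode b 1 = -sinMode b 0 := by norm_num [sinMode]

theorem cosMode_sub {r : ℕ} (ha : (n - 1 : ℝ) * a = r * π) {m : ℕ} (hm : m ≤ n) :
    cosMode a (n - m) = cosMode a m := by
  rw [cosMode, cosMode, ← cos_nat_mul_two_pi_sub _ r, Nat.cast_sub hm]
  congr 1
  linear_combination -2 * ha

theorem sinMode_sub (hb : 2 * (n - 1 : ℝ) * b = π) {m : ℕ} (hm : m ≤ n) :
    sinMode b (n - m) = sinMode b m := by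
  rw [sinMode, sinMode, ← sin_pi_sub, Nat.cast_sub hm]
  congr 1
  linear_combination -hb

theorem sinMode_pos (hb : 2 * (n - 1 : ℝ) * b = π) (hb0 : 0 < b) {m : ℕ} (h1 : 1 ≤ m)
    (hm : m < n) : 0 < sinMode b m := by
  have h1' : (1 : ℝ) ≤ m := by exact_mod_cast h1
  have hm' : (m : ℝ) + 1 ≤ n := by exact_mod_cast hm
  exact sin_pos_of_pos_of_lt_pi (by nlinarith) (by nlinarith)

end Modes

section CycleSpectrum

variable {n : ℕ} [NeZero n]

theorem isLapEigen_tokenGraph_cycleG (hn : 3 ≤ n) {r : ℕ} (hr : 2 * r + 1 < n) :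
    IsLapEigen (tokenGraph (cycleG n) 2) (8 * sin (r * π / (n - 1)) ^ 2) := by
  classical
  have : Fact (1 < n) := ⟨by omega⟩
  have hn1 : (0 : ℝ) < n - 1 := by
    have : (3 : ℝ) ≤ n := by exact_mod_cast hn
    linarith
  set a : ℝ := r * π / (n - 1) with ha
  have hna : (n - 1 : ℝ) * a = r * π := by
    rw [ha]
    field_simp
  have hF (m : ℕ) (hm : m ≤ n) := cosMode_sub hna hm
  have hF1 : cosMode a 1 = 1 * cosMode a 0 := by rw [one_mul, cosMode_one]
  refine ⟨fun A => pairSum (fun z => cosMode a z.val) A.1, fun h => ?_, funext fun A => ?_⟩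
  · have h01 : (0 : ZMod n) ≠ 1 := zero_ne_one
    have h := congrFun h ⟨{0, 1}, card_pair h01⟩
    rw [pairSum_pair (apply_val_neg hF) h01, sub_zero, ZMod.val_one, Pi.zero_apply] at h
    have ha1 : a < π / 2 := by
      rw [ha, div_lt_iff₀ hn1]
      have : (2 * r + 1 : ℝ) < n := by exact_mod_cast hr
      nlinarith [pi_pos]
    have : 0 < cosMode a 1 := by
      norm_num [cosMode]
      exact cos_pos_of_mem_Ioo ⟨by linarith [show 0 ≤ a by positivity], ha1⟩
    linarith
  · have hA := degree_mul_pairSum_sub_sum_cycleG_of_nat hn hF hF1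
      cosMode_add_cosMode_add_two A
    rw [lapMat_eq_lapMatrix, SimpleGraph.lapMatrix_mulVec_apply, Pi.smul_apply, smul_eq_mul]
    rw [one_mul] at hA
    rw [hA, cos_two_mul_eq_one_sub]
    ring

theorem le_of_isLapEigen_tokenGraph_cycleG (hn : 3 ≤ n) {lam : ℝ}
    (hlam : IsLapEigen (tokenGraph (cycleG n) 2) lam) :
    lam ≤ 8 * sin ((n - 2) / (n - 1) * (π / 2)) ^ 2 := by
  classical
  have hn1 : (0 : ℝ) < n - 1 := by
    have : (3 : ℝ) ≤ n := by exact_mod_cast hn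
    linarith
  set b : ℝ := π / (2 * (n - 1)) with hb
  have hb0 : 0 < b := by positivity
  have hbn : 2 * (n - 1 : ℝ) * b = π := by rw [hb]; field_simp
  have hF (m : ℕ) (hm : m ≤ n) := sinMode_sub hbn hm
  have hF1 : sinMode b 1 = -1 * sinMode b 0 := by rw [neg_one_mul, sinMode_one]
  have hpos (A : {s : Finset (ZMod n) // s.card = 2}) :
      0 < pairSum (fun z => sinMode b z.val) A.1 := by
    obtain ⟨p, q, hpq, hA⟩ := card_eq_two.1 A.2
    rw [hA, pairSum_pair (apply_val_neg hF) hpq]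
    have hk := (ZMod.val_ne_zero (q - p)).2 (sub_ne_zero.2 hpq.symm)
    exact mul_pos two_pos (sinMode_pos hbn hb0 (Nat.one_le_iff_ne_zero.2 hk) (q - p).val_lt)
  refine (le_of_isLapEigen_of_sum_neighborFinset_le _ (μ := 4 + 4 * cos (2 * b)) hpos
    (fun A => ?_) hlam).trans_eq ?_
  · have hA := degree_mul_pairSum_sub_sum_cycleG_of_nat hn hF hF1
      sinMode_add_sinMode_add_two A
    linarith
  · have e : (n - 2) / (n - 1) * (π / 2) = π / 2 - b := by
      rw [hb]
      field_simp
      ring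
    rw [e, sin_pi_div_two_sub, cos_sq b]
    ring

end CycleSpectrum

noncomputable section

theorem stmt_14 {n ν : ℕ} [NeZero n] (hν : 2 ≤ ν) (hn : n = 2 * ν) :
    (∀ r : ℕ, r < ν →
        IsLapEigen (tokenGraph (cycleG n) 2) (8 * Real.sin ((r : ℝ) * π / ((n : ℝ) - 1)) ^ 2)) ∧
      8 * Real.sin ((0 : ℝ) * π / ((n : ℝ) - 1)) ^ 2 = 0 ∧
      lapSpecRadius (tokenGraph (cycleG n) 2) =
        8 * Real.sin ((((n : ℝ) - 2) / ((n : ℝ) - 1)) * (π / 2)) ^ 2 := by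
  have hn3 : 3 ≤ n := by omega
  have htop : ((ν - 1 : ℕ) : ℝ) * π / (n - 1) = (n - 2) / (n - 1) * (π / 2) := by
    rw [Nat.cast_sub (by omega), hn]
    push_cast
    ring
  refine ⟨fun r hr => isLapEigen_tokenGraph_cycleG hn3 (by omega), by simp, ?_⟩
  refine lapSpecRadius_eq_of_forall_le _ ?_ fun _ => le_of_isLapEigen_tokenGraph_cycleG hn3
  rw [← htop]
  exact isLapEigen_tokenGraph_cycleG hn3 (by omega)

end
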